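/- Simplex-PI terminates after at most n(m−1)⌈(n/(1−γ)) log(n/(1−γ))⌉ iterations: if π_0, π_1, …, π_K is a sequence of policies generated by Simplex-PI such that π_k is not optimal for every k < K, then K ≤ n(m−1)⌈(n/(1−γ)) log(n/(1−γ))⌉. -/

import Mathlib

open Matrix BigOperators

/-- A finite discounted MDP with `n ≥ 1` states and `m ≥ 2` actions:
transition probabilities `p i a j`, rewards `r i a j`, discount factor `γ ∈ (0,1)`. -/
structure MDP (n m : ℕ) : Type where
  n_pos : 1 ≤ n
  m_ge_two : 2 ≤ m
  p : Fin n → Fin m → Fin n → ℝ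
  r : Fin n → Fin m → Fin n → ℝ
  γ : ℝ
  p_nonneg : ∀ i a j, 0 ≤ p i a j
  p_sum : ∀ i a, ∑ j, p i a j = 1
  γ_pos : 0 < γ
  γ_lt_one : γ < 1

/-- A (stationary deterministic) policy. -/
abbrev MDP.Policy (n m : ℕ) : Type := Fin n → Fin m

namespace MDP

variable {n m : ℕ}

/-- The row-stochastic transition matrix `P_π` of a policy. -/
def P (M : MDP n m) (π : Policy n m) : Matrix (Fin n) (Fin n) ℝ :=
  Matrix.of fun i j => M.p i (π i) j

/-- The expected reward vector `r_π` of a policy. -/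
def rPol (M : MDP n m) (π : Policy n m) : Fin n → ℝ :=
  fun i => ∑ j, M.p i (π i) j * M.r i (π i) j

/-- The Bellman operator `T_π v = r_π + γ P_π v` of a policy. -/
def Tpol (M : MDP n m) (π : Policy n m) (v : Fin n → ℝ) : Fin n → ℝ :=
  fun i => M.rPol π i + M.γ * (M.P π *ᵥ v) i

/-- `IsValue M V` asserts that, for every policy `π`, `V π` is the value function `v_π`,
i.e. the (unique) solution of the Bellman equation `v_π = T_π v_π`. -/
def IsValue (M : MDP n m) (V : Policy n m → Fin n → ℝ) : Prop :=
  ∀ π, V π = M.Tpol π (V π)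

/-- The optimal Bellman operator `T v = max_π T_π v` (componentwise maximum). -/
noncomputable def T (M : MDP n m) (v : Fin n → ℝ) : Fin n → ℝ :=
  fun i => ⨆ π : Policy n m, M.Tpol π v i

/-- The optimal value function `v_*`, the componentwise maximum of `v_π` over policies. -/
noncomputable def vStar (M : MDP n m) (V : Policy n m → Fin n → ℝ) : Fin n → ℝ :=
  fun i => ⨆ π : Policy n m, V π i

/-- A policy is optimal when its value equals `v_*`. -/
def IsOptimal (M : MDP n m) (V : Policy n m → Fin n → ℝ) (π : Policy n m) : Prop :=
  V π = M.vStar V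

/-- `π'` is greedy with respect to `v_π`: `T_{π'} v_π = T v_π`.  One step of Howard's PI
from a non-optimal `π` moves to such a `π'`. -/
def Greedy (M : MDP n m) (V : Policy n m → Fin n → ℝ) (π π' : Policy n m) : Prop :=
  M.Tpol π' (V π) = M.T (V π)

/-- One step of Simplex-PI: `π'` agrees with `π` except at a single state `s` maximizing
the advantage `a_π(i) = (T v_π - v_π)(i)`, where `π'(s)` achieves `T v_π(s)`. -/
def SimplexStep (M : MDP n m) (V : Policy n m → Fin n → ℝ) (π π' : Policy n m) : Prop :=
  ∃ s : Fin n, (∀ i, i ≠ s → π' i = π i) ∧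
    (∀ i, M.T (V π) i - V π i ≤ M.T (V π) s - V π s) ∧
    M.Tpol π' (V π) s = M.T (V π) s

/-- The vector `x_π = (I - γ P_πᵀ)⁻¹ 1`. -/
noncomputable def xPol (M : MDP n m) (π : Policy n m) : Fin n → ℝ :=
  ((1 : Matrix (Fin n) (Fin n) ℝ) - M.γ • (M.P π)ᵀ)⁻¹ *ᵥ (fun _ => (1 : ℝ))

/-- `R` is a recurrent class of `π`: nonempty, closed under positive-probability
transitions of `P_π`, and every state of `R` is reachable from every other state of `R`
along positive-probability transitions.  (For a deterministic MDP this is the notion of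
a cycle of `π`.) -/
def IsRecClass (M : MDP n m) (π : Policy n m) (R : Set (Fin n)) : Prop :=
  R.Nonempty ∧ (∀ i ∈ R, ∀ j, 0 < M.P π i j → j ∈ R) ∧
    ∀ i ∈ R, ∀ j ∈ R, Relation.ReflTransGen (fun a b => 0 < M.P π a b) i j

/-- A state is recurrent for `π` if it belongs to some recurrent class of `π`. -/
def Recurrent (M : MDP n m) (π : Policy n m) (i : Fin n) : Prop :=
  ∃ R : Set (Fin n), M.IsRecClass π R ∧ i ∈ R

/-- A state is transient for `π` if it is not recurrent for `π`. -/
def Transient (M : MDP n m) (π : Policy n m) (i : Fin n) : Prop :=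
  ¬ M.Recurrent π i

/-- Assumption 1: `τ_t, τ_r ≥ 1` with `x_π(i) ≤ τ_t` for transient states and
`x_π(i) ≥ n / ((1-γ) τ_r)` for recurrent states, for every policy `π`. -/
def Ass1 (M : MDP n m) (τt τr : ℝ) : Prop :=
  1 ≤ τt ∧ 1 ≤ τr ∧
    (∀ π i, M.Transient π i → M.xPol π i ≤ τt) ∧
    (∀ π i, M.Recurrent π i → (n : ℝ) / ((1 - M.γ) * τr) ≤ M.xPol π i)

/-- Assumption 2: the state space is partitioned into a set of states transient for every
policy and a set of states recurrent for every policy. -/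
def Ass2 (M : MDP n m) : Prop :=
  ∃ 𝒯 ℛ : Set (Fin n), 𝒯 ∪ ℛ = Set.univ ∧ 𝒯 ∩ ℛ = ∅ ∧
    ∀ π : Policy n m, (∀ i ∈ 𝒯, M.Transient π i) ∧ (∀ i ∈ ℛ, M.Recurrent π i)

/-- The MDP is deterministic when every transition probability is 0 or 1. -/
def Deterministic (M : MDP n m) : Prop :=
  ∀ i a j, M.p i a j = 0 ∨ M.p i a j = 1

/-- `V_max = (max_π ‖r_π‖_∞) / (1 - γ)`. -/
noncomputable def Vmax (M : MDP n m) : ℝ :=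
  (⨆ π : Policy n m, ‖M.rPol π‖) / (1 - M.γ)

end MDP

/-!
Let `D_k = ∑ᵢ (v_*(i) - v_{π_k}(i))`.  A Simplex-PI step raises `∑ᵢ v(i)` by at least the largest
advantage, which is at least `(1 - γ)/n · D_k`; hence `D_{k+1} ≤ (1 - (1 - γ)/n) D_k`.  On the
other hand, a non-optimal `π_k` uses at some state `s` an action whose one-step loss
`v_*(s) - T_{π_k} v_*(s)` is at least `(1 - γ)/n · D_k`, and every policy using that action at `s`
has `D` at least this loss.  With `x = n/(1 - γ)` and `N = ⌈x log x⌉`, after `N` more steps `D` has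
shrunk by the factor `(1 - 1/x)^N < 1/x`, so the pair `(s, π_k(s))` is never used again.  As there
are at most `n(m - 1)` suboptimal state-action pairs, the run has at most `n(m - 1) N` steps.
-/

open Finset

lemma one_sub_inv_pow_ceil_lt_inv {x : ℝ} (hx : 1 < x) :
    (1 - x⁻¹) ^ ⌈x * Real.log x⌉₊ < x⁻¹ := by
  set N := ⌈x * Real.log x⌉₊
  have hx0 : 0 < x := by linarith
  have hN : 0 < N := Nat.ceil_pos.2 (mul_pos hx0 (Real.log_pos hx))
  have hbase : 1 - x⁻¹ < Real.exp (-x⁻¹) := by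
    linarith [Real.add_one_lt_exp (neg_ne_zero.2 (inv_ne_zero hx0.ne'))]
  have hlog : Real.log x ≤ N * x⁻¹ := by
    rw [← div_eq_mul_inv, le_div_iff₀ hx0, mul_comm]
    exact Nat.le_ceil _
  calc (1 - x⁻¹) ^ N < Real.exp (-x⁻¹) ^ N :=
        pow_lt_pow_left₀ hbase (by simpa using (inv_lt_one_of_one_lt₀ hx).le) hN.ne'
    _ = Real.exp (-(N * x⁻¹)) := by rw [← Real.exp_nat_mul]; ring_nf
    _ ≤ Real.exp (-Real.log x) := Real.exp_le_exp.2 (neg_le_neg hlog)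
    _ = x⁻¹ := by rw [Real.exp_neg, Real.exp_log hx0]

lemma card_filter_prod_le {α β : Type*} [Fintype α] [Fintype β] (P : α × β → Prop)
    [DecidablePred P] (h : ∀ a, ∃ b, ¬ P (a, b)) :
    #(univ.filter P) ≤ Fintype.card α * (Fintype.card β - 1) := by
  have hfiber (a : α) : #(univ.filter fun b => P (a, b)) ≤ Fintype.card β - 1 := by
    obtain ⟨b, hb⟩ := h a
    exact Nat.le_sub_one_of_lt (card_lt_card (filter_ssubset.2 ⟨b, mem_univ b, hb⟩))
  calc #(univ.filter P) = ∑ a, #(univ.filter fun b => P (a, b)) := by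
        simp only [card_filter, Fintype.sum_prod_type]
    _ ≤ ∑ _a : α, (Fintype.card β - 1) := sum_le_sum fun a _ => hfiber a
    _ = Fintype.card α * (Fintype.card β - 1) := by rw [sum_const, card_univ, smul_eq_mul]

/-- Pigeonhole: the values at `0, N, 2N, …` are pairwise distinct elements of `S`. -/
lemma le_card_mul_of_separated {α : Type*} (S : Finset α) (f : ℕ → α) {K N : ℕ}
    (hf : ∀ k < K, f k ∈ S) (hsep : ∀ k k', k + N ≤ k' → k' < K → f k ≠ f k') :
    K ≤ #S * N := by
  by_contra! hK
  have hlt (j : ℕ) (hj : j ∈ range (#S + 1)) : j * N < K :=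
    (Nat.mul_le_mul_right N (Nat.lt_succ_iff.1 (mem_range.1 hj))).trans_lt hK
  have hne {j j'} (hj' : j' ∈ range (#S + 1)) (hjj' : j < j') : f (j * N) ≠ f (j' * N) :=
    hsep _ _ (by nlinarith) (hlt j' hj')
  have hinj : Set.InjOn (fun j => f (j * N)) (range (#S + 1)) := by
    intro j hj j' hj' heq
    rcases lt_trichotomy j j' with hjj' | rfl | hjj'
    · exact absurd heq (hne hj' hjj')
    · rfl
    · exact absurd heq.symm (hne hj hjj')
  have := card_le_card_of_injOn _ (fun j hj => hf _ (hlt j hj)) hinj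
  simp at this

namespace Matrix

variable {ι : Type*} [Fintype ι] [DecidableEq ι] {Q : Matrix ι ι ℝ} {γ : ℝ}
  {u w : ι → ℝ}

lemma mulVec_apply_le_of_mem_rowStochastic (hQ : Q ∈ rowStochastic ℝ ι) {c : ℝ}
    (hu : ∀ j, u j ≤ c) (i : ι) : (Q *ᵥ u) i ≤ c :=
  calc (Q *ᵥ u) i ≤ ∑ j, Q i j * c :=
        sum_le_sum fun j _ => mul_le_mul_of_nonneg_left (hu j) (nonneg_of_mem_rowStochastic hQ)
    _ = c := by rw [← sum_mul, sum_row_of_mem_rowStochastic hQ, one_mul]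

lemma le_mulVec_apply_of_mem_rowStochastic (hQ : Q ∈ rowStochastic ℝ ι) {c : ℝ}
    (hu : ∀ j, c ≤ u j) (i : ι) : c ≤ (Q *ᵥ u) i := by
  have := mulVec_apply_le_of_mem_rowStochastic hQ (u := -u) (c := -c)
    (fun j => neg_le_neg (hu j)) i
  rwa [mulVec_neg, Pi.neg_apply, neg_le_neg_iff] at this

lemma nonneg_of_eq_add_smul_mulVec (hQ : Q ∈ rowStochastic ℝ ι) (hγ₀ : 0 ≤ γ)
    (hγ : γ < 1) (hu : u = w + γ • Q *ᵥ u) (hw : 0 ≤ w) : 0 ≤ u := by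
  intro i
  have : Nonempty ι := ⟨i⟩
  obtain ⟨i₀, hi₀⟩ := Finite.exists_min u
  have h := congrFun hu i₀
  have hQu := le_mulVec_apply_of_mem_rowStochastic hQ hi₀ i₀
  simp only [Pi.add_apply, Pi.smul_apply, smul_eq_mul] at h
  have hw₀ : 0 ≤ w i₀ := hw i₀
  have : 0 ≤ (1 - γ) * u i₀ := by linarith [mul_le_mul_of_nonneg_left hQu hγ₀]
  exact ((mul_nonneg_iff_of_pos_left (sub_pos.2 hγ)).1 this).trans (hi₀ i)

lemma le_of_eq_add_smul_mulVec (hQ : Q ∈ rowStochastic ℝ ι) (hγ : 0 ≤ γ)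
    (hu : u = w + γ • Q *ᵥ u) (hu₀ : 0 ≤ u) : w ≤ u := by
  intro i
  have h := congrFun hu i
  simp only [Pi.add_apply, Pi.smul_apply, smul_eq_mul] at h
  linarith [mul_nonneg hγ (nonneg_mulVec_of_mem_rowStochastic hQ hu₀ i)]

lemma exists_one_sub_mul_le_of_eq_add_smul_mulVec [Nonempty ι] (hQ : Q ∈ rowStochastic ℝ ι)
    (hγ₀ : 0 ≤ γ) (hγ : γ ≤ 1) (hu : u = w + γ • Q *ᵥ u) :
    ∃ i₁, ∀ i, (1 - γ) * u i ≤ w i₁ := by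
  obtain ⟨i₁, hi₁⟩ := Finite.exists_max u
  refine ⟨i₁, fun i => ?_⟩
  have h := congrFun hu i₁
  have hQu := mulVec_apply_le_of_mem_rowStochastic hQ hi₁ i₁
  simp only [Pi.add_apply, Pi.smul_apply, smul_eq_mul] at h
  linarith [mul_le_mul_of_nonneg_left (hi₁ i) (sub_nonneg.2 hγ),
    mul_le_mul_of_nonneg_left hQu hγ₀]

end Matrix

namespace MDP

variable {n m : ℕ} (M : MDP n m) {V : Policy n m → Fin n → ℝ}

lemma P_mem_rowStochastic (π : Policy n m) : M.P π ∈ rowStochastic ℝ (Fin n) :=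
  mem_rowStochastic_iff_sum.2 ⟨fun i j => M.p_nonneg i (π i) j, fun i => M.p_sum i (π i)⟩

lemma Tpol_sub_Tpol (π : Policy n m) (v w : Fin n → ℝ) :
    M.Tpol π v - M.Tpol π w = M.γ • M.P π *ᵥ (v - w) := by
  ext i
  simp only [Tpol, mulVec_sub, Pi.sub_apply, Pi.smul_apply, smul_eq_mul]
  ring

lemma Tpol_apply_eq_of_apply_eq {π π' : Policy n m} (v : Fin n → ℝ) {i : Fin n}
    (h : π' i = π i) : M.Tpol π' v i = M.Tpol π v i := by
  simp [Tpol, rPol, P, mulVec, dotProduct, h]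

lemma Tpol_mono (π : Policy n m) {v w : Fin n → ℝ} (h : v ≤ w) :
    M.Tpol π v ≤ M.Tpol π w := by
  have hP := nonneg_mulVec_of_mem_rowStochastic (M.P_mem_rowStochastic π) (sub_nonneg.2 h)
  rw [← sub_nonneg, M.Tpol_sub_Tpol]
  exact fun i => mul_nonneg M.γ_pos.le (hP i)

lemma Tpol_le_T (π : Policy n m) (v : Fin n → ℝ) : M.Tpol π v ≤ M.T v := fun i =>
  le_ciSup (f := fun σ : Policy n m => M.Tpol σ v i) (Set.finite_range _).bddAbove π

lemma le_vStar (π : Policy n m) : V π ≤ M.vStar V := fun i =>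
  le_ciSup (f := fun σ : Policy n m => V σ i) (Set.finite_range _).bddAbove π

lemma exists_eq_vStar (i : Fin n) : ∃ σ : Policy n m, V σ i = M.vStar V i := by
  have : Nonempty (Policy n m) := ⟨fun _ => ⟨0, by linarith [M.m_ge_two]⟩⟩
  obtain ⟨σ, hσ⟩ := Finite.exists_max fun σ : Policy n m => V σ i
  exact ⟨σ, le_antisymm (M.le_vStar σ i) (ciSup_le hσ)⟩

lemma value_sub_value (hV : M.IsValue V) (π' π : Policy n m) :
    V π' - V π = (M.Tpol π' (V π) - V π) + M.γ • M.P π' *ᵥ (V π' - V π) := by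
  conv_lhs => rw [hV π']
  rw [← M.Tpol_sub_Tpol]
  abel

lemma vStar_sub_value (hV : M.IsValue V) (π : Policy n m) :
    M.vStar V - V π =
      (M.vStar V - M.Tpol π (M.vStar V)) + M.γ • M.P π *ᵥ (M.vStar V - V π) := by
  conv_lhs => rw [hV π]
  rw [← M.Tpol_sub_Tpol, ← hV π]
  abel

lemma one_sub_mul_vStar_sub_le (hV : M.IsValue V) (π : Policy n m) {α : ℝ}
    (hα : ∀ j, M.T (V π) j - V π j ≤ α) (i : Fin n) :
    (1 - M.γ) * (M.vStar V i - V π i) ≤ α := by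
  obtain ⟨σ, hσ⟩ := M.exists_eq_vStar (V := V) i
  have := Fin.pos_iff_nonempty.1 M.n_pos
  obtain ⟨i₁, hi₁⟩ := exists_one_sub_mul_le_of_eq_add_smul_mulVec (M.P_mem_rowStochastic σ)
    M.γ_pos.le M.γ_lt_one.le (M.value_sub_value hV σ π)
  have := hi₁ i
  simp only [Pi.sub_apply, ← hσ] at this ⊢
  linarith [M.Tpol_le_T σ (V π) i₁, hα i₁]

noncomputable def totalGap (V : Policy n m → Fin n → ℝ) (π : Policy n m) : ℝ :=
  ∑ i, (M.vStar V i - V π i)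

lemma one_sub_γ_div_pos : 0 < (1 - M.γ) / n :=
  div_pos (sub_pos.2 M.γ_lt_one) (Nat.cast_pos.2 M.n_pos)

lemma one_sub_γ_div_le_one : (1 - M.γ) / n ≤ 1 := by
  rw [div_le_one (Nat.cast_pos.2 M.n_pos)]
  linarith [M.γ_pos, (Nat.one_le_cast (α := ℝ)).2 M.n_pos]

lemma totalGap_pos (π : Policy n m) (hπ : ¬ M.IsOptimal V π) : 0 < M.totalGap V π := by
  obtain ⟨i, hi⟩ := Function.ne_iff.1 hπ
  exact sum_pos' (fun j _ => sub_nonneg.2 (M.le_vStar π j))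
    ⟨i, mem_univ i, sub_pos.2 ((M.le_vStar π i).lt_of_ne hi)⟩

lemma one_sub_mul_totalGap_le (hV : M.IsValue V) (π : Policy n m) {α : ℝ}
    (hα : ∀ j, M.T (V π) j - V π j ≤ α) : (1 - M.γ) * M.totalGap V π ≤ n * α :=
  calc (1 - M.γ) * M.totalGap V π = ∑ i, (1 - M.γ) * (M.vStar V i - V π i) := mul_sum _ _ _
    _ ≤ ∑ _i : Fin n, α := sum_le_sum fun i _ => M.one_sub_mul_vStar_sub_le hV π hα i
    _ = n * α := by simp

lemma one_sub_mul_totalGap_le_of_simplexStep (hV : M.IsValue V) {π π' : Policy n m}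
    (h : M.SimplexStep V π π') :
    (1 - M.γ) * M.totalGap V π ≤ n * ∑ j, (V π' j - V π j) := by
  obtain ⟨s, hagree, hmax, hs⟩ := h
  have hw : 0 ≤ M.Tpol π' (V π) - V π := by
    intro j
    rcases eq_or_ne j s with rfl | hj
    · have := M.Tpol_le_T π (V π) j
      rw [← hV π] at this
      simpa [hs] using this
    · simp [M.Tpol_apply_eq_of_apply_eq _ (hagree j hj), ← hV π]
  have hu := M.value_sub_value hV π' π
  have hu₀ :=
    nonneg_of_eq_add_smul_mulVec (M.P_mem_rowStochastic π') M.γ_pos.le M.γ_lt_one hu hw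
  have hwu := le_of_eq_add_smul_mulVec (M.P_mem_rowStochastic π') M.γ_pos.le hu hu₀ s
  have hgain : M.T (V π) s - V π s ≤ ∑ j, (V π' j - V π j) := by
    simp only [Pi.sub_apply, hs] at hwu
    exact hwu.trans (single_le_sum (fun j _ => hu₀ j) (mem_univ s))
  calc (1 - M.γ) * M.totalGap V π ≤ n * (M.T (V π) s - V π s) :=
        M.one_sub_mul_totalGap_le hV π hmax
    _ ≤ n * ∑ j, (V π' j - V π j) := by gcongr

lemma totalGap_le_of_simplexStep (hV : M.IsValue V) {π π' : Policy n m}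
    (h : M.SimplexStep V π π') :
    M.totalGap V π' ≤ (1 - (1 - M.γ) / n) * M.totalGap V π := by
  have hn : (0 : ℝ) < n := by exact_mod_cast M.n_pos
  have hgain := M.one_sub_mul_totalGap_le_of_simplexStep hV h
  have hsplit : M.totalGap V π' = M.totalGap V π - ∑ j, (V π' j - V π j) := by
    simp only [totalGap, ← sum_sub_distrib]
    exact sum_congr rfl fun j _ => by ring
  have hgain' : (1 - M.γ) / n * M.totalGap V π ≤ ∑ j, (V π' j - V π j) := by
    rw [div_mul_eq_mul_div, div_le_iff₀ hn]
    linarith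
  rw [hsplit]
  linarith

lemma exists_div_mul_totalGap_le (hV : M.IsValue V) (π : Policy n m) :
    ∃ s, (1 - M.γ) / n * M.totalGap V π ≤ M.vStar V s - M.Tpol π (M.vStar V) s := by
  have := Fin.pos_iff_nonempty.1 M.n_pos
  obtain ⟨s, hs⟩ := exists_one_sub_mul_le_of_eq_add_smul_mulVec (M.P_mem_rowStochastic π)
    M.γ_pos.le M.γ_lt_one.le (M.vStar_sub_value hV π)
  refine ⟨s, ?_⟩
  have hn : (0 : ℝ) < n := by exact_mod_cast M.n_pos
  rw [div_mul_eq_mul_div, div_le_iff₀ hn, mul_comm _ (n : ℝ)]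
  calc (1 - M.γ) * M.totalGap V π = ∑ i, (1 - M.γ) * (M.vStar V i - V π i) := mul_sum _ _ _
    _ ≤ ∑ _i : Fin n, (M.vStar V s - M.Tpol π (M.vStar V) s) := sum_le_sum fun i _ => hs i
    _ = n * (M.vStar V s - M.Tpol π (M.vStar V) s) := by simp [mul_sub]

lemma sub_Tpol_vStar_le_totalGap (hV : M.IsValue V) {π π' : Policy n m} {s : Fin n}
    (h : π' s = π s) : M.vStar V s - M.Tpol π (M.vStar V) s ≤ M.totalGap V π' := by
  have hu₀ : 0 ≤ M.vStar V - V π' := sub_nonneg.2 (M.le_vStar π')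
  have := le_of_eq_add_smul_mulVec (M.P_mem_rowStochastic π') M.γ_pos.le
    (M.vStar_sub_value hV π') hu₀ s
  simp only [Pi.sub_apply, M.Tpol_apply_eq_of_apply_eq _ h] at this
  exact this.trans (single_le_sum (fun j _ => hu₀ j) (mem_univ s))

noncomputable def suboptimalPairs (V : Policy n m → Fin n → ℝ) : Finset (Fin n × Fin m) :=
  univ.filter fun p => M.Tpol (fun _ => p.2) (M.vStar V) p.1 < M.vStar V p.1

lemma mk_mem_suboptimalPairs (π : Policy n m) (s : Fin n) :
    (s, π s) ∈ M.suboptimalPairs V ↔ M.Tpol π (M.vStar V) s < M.vStar V s := by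
  simp [suboptimalPairs, M.Tpol_apply_eq_of_apply_eq (π := π) (π' := fun _ => π s) _ rfl]

lemma mk_mem_suboptimalPairs_of_le {π : Policy n m} (hπ : ¬ M.IsOptimal V π) {s : Fin n}
    (hs : (1 - M.γ) / n * M.totalGap V π ≤ M.vStar V s - M.Tpol π (M.vStar V) s) :
    (s, π s) ∈ M.suboptimalPairs V :=
  (M.mk_mem_suboptimalPairs π s).2 <|
    sub_pos.1 ((mul_pos M.one_sub_γ_div_pos (M.totalGap_pos π hπ)).trans_le hs)

lemma card_suboptimalPairs_le (hV : M.IsValue V) : #(M.suboptimalPairs V) ≤ n * (m - 1) := by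
  simpa [suboptimalPairs] using card_filter_prod_le
    (fun p : Fin n × Fin m => M.Tpol (fun _ => p.2) (M.vStar V) p.1 < M.vStar V p.1) fun s => by
    obtain ⟨σ, hσ⟩ := M.exists_eq_vStar (V := V) s
    refine ⟨σ s, not_lt.2 ?_⟩
    calc M.vStar V s = M.Tpol σ (V σ) s := by rw [← hσ, ← hV σ]
      _ ≤ M.Tpol σ (M.vStar V) s := M.Tpol_mono σ (M.le_vStar σ) s
      _ = M.Tpol (fun _ => σ s) (M.vStar V) s := M.Tpol_apply_eq_of_apply_eq _ rfl

lemma totalGap_le_pow_mul (hV : M.IsValue V) {π : ℕ → Policy n m} {K : ℕ}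
    (hstep : ∀ k < K, M.SimplexStep V (π k) (π (k + 1))) (k : ℕ) :
    ∀ j, k + j ≤ K →
      M.totalGap V (π (k + j)) ≤ (1 - (1 - M.γ) / n) ^ j * M.totalGap V (π k)
  | 0, _ => by simp
  | j + 1, hj => by
    calc M.totalGap V (π (k + j + 1))
        ≤ (1 - (1 - M.γ) / n) * M.totalGap V (π (k + j)) :=
          M.totalGap_le_of_simplexStep hV (hstep _ (by omega))
      _ ≤ (1 - (1 - M.γ) / n) * ((1 - (1 - M.γ) / n) ^ j * M.totalGap V (π k)) :=
          mul_le_mul_of_nonneg_left (totalGap_le_pow_mul hV hstep k j (by omega))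
            (sub_nonneg.2 M.one_sub_γ_div_le_one)
      _ = _ := by ring

lemma apply_ne_of_le_sub_Tpol_vStar (hV : M.IsValue V) {π : ℕ → Policy n m} {K : ℕ}
    (hrun : ∀ k < K, ¬ M.IsOptimal V (π k) ∧ M.SimplexStep V (π k) (π (k + 1)))
    {N : ℕ} (hN : (1 - (1 - M.γ) / n) ^ N < (1 - M.γ) / n) {k k' : ℕ} (hkk' : k + N ≤ k')
    (hk' : k' < K) {s : Fin n}
    (hs : (1 - M.γ) / n * M.totalGap V (π k) ≤ M.vStar V s - M.Tpol (π k) (M.vStar V) s) :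
    π k' s ≠ π k s := by
  intro heq
  have hpos := M.totalGap_pos _ (hrun k (by omega)).1
  obtain ⟨j, rfl⟩ := Nat.exists_eq_add_of_le (le_trans (Nat.le_add_right k N) hkk')
  have hc : (1 - (1 - M.γ) / n) ^ j ≤ (1 - (1 - M.γ) / n) ^ N :=
    pow_le_pow_of_le_one (sub_nonneg.2 M.one_sub_γ_div_le_one)
      (sub_le_self _ M.one_sub_γ_div_pos.le) (by omega)
  have hdecay := M.totalGap_le_pow_mul hV (fun k hk => (hrun k hk).2) k j hk'.le
  have hloss := M.sub_Tpol_vStar_le_totalGap hV heq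
  nlinarith [mul_lt_mul_of_pos_right hN hpos, mul_le_mul_of_nonneg_right hc hpos.le]

end MDP

/-- Simplex-PI terminates after at most
`n(m-1)⌈(n/(1-γ)) log(n/(1-γ))⌉` iterations. -/
theorem simplex_termination {n m : ℕ} (M : MDP n m)
    (V : MDP.Policy n m → Fin n → ℝ) (hV : M.IsValue V)
    (π : ℕ → MDP.Policy n m) (K : ℕ)
    (hrun : ∀ k < K, ¬ M.IsOptimal V (π k) ∧ M.SimplexStep V (π k) (π (k + 1))) :
    (K : ℝ) ≤ (n : ℝ) * ((m : ℝ) - 1) *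
      ((⌈((n : ℝ) / (1 - M.γ)) * Real.log ((n : ℝ) / (1 - M.γ))⌉ : ℤ) : ℝ) := by
  set x := (n : ℝ) / (1 - M.γ)
  have hx : 1 < x := by
    rw [one_lt_div (by linarith [M.γ_lt_one])]
    linarith [M.γ_pos, (Nat.one_le_cast (α := ℝ)).2 M.n_pos]
  have hN := one_sub_inv_pow_ceil_lt_inv hx
  rw [inv_div] at hN
  choose s hs using M.exists_div_mul_totalGap_le hV
  have hK := le_card_mul_of_separated (M.suboptimalPairs V) (fun k => (s (π k), π k (s (π k))))
    (K := K) (N := ⌈x * Real.log x⌉₊)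
    (fun k hk => M.mk_mem_suboptimalPairs_of_le (hrun k hk).1 (hs (π k)))
    (fun k k' hkk' hk' heq => M.apply_ne_of_le_sub_Tpol_vStar hV hrun hN hkk' hk' (hs (π k))
      (by simp only [Prod.mk.injEq] at heq; rw [heq.2, heq.1]))
  have hm : 1 ≤ m := by linarith [M.m_ge_two]
  calc (K : ℝ) ≤ ((n * (m - 1) * ⌈x * Real.log x⌉₊ : ℕ) : ℝ) := by
        exact_mod_cast hK.trans (Nat.mul_le_mul_right _ (M.card_suboptimalPairs_le hV))
    _ = _ := by
        rw [← Int.natCast_ceil_eq_ceil (mul_nonneg (by linarith) (Real.log_nonneg hx.le))]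
        push_cast [Nat.cast_sub hm]
        ring
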